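/- Let a < 0 and η > 0. There exist constants C, η₁, η₂ > 0 such that for all y ≤ 0 and all s ≥ 0: e^{−η|y|} · (1+|y−as|)^{−1} ≤ C ( e^{−η₁|y|} · e^{−η₂ s} + e^{−η|y|} · (1+s)^{−1} ). -/

import Mathlib

/-!
Write `t = |y|` and `b = -a > 0`, so that `|y - a s| = |b s - t|`. If `b s ≤ 2 t`, half of the
decay `e^{-η t}` already dominates `e^{-η b s / 4}`, which gives the first term. Otherwise
`b s - t ≥ b s / 2`, so `1 + |y - a s|` is comparable to `1 + s`, which gives the second term.
-/

open Real

lemma exp_neg_mul_le_exp_mul_exp {η b t s : ℝ} (hη : 0 ≤ η) (hst : b * s ≤ 2 * t) :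
    exp (-η * t) ≤ exp (-(η / 2) * t) * exp (-(η * b / 4) * s) := by
  rw [← exp_add, exp_le_exp]
  nlinarith

lemma one_add_le_max_mul_one_add {b s x : ℝ} (hb : 0 < b) (hs : 0 ≤ s) (hx : b * s / 2 ≤ x) :
    1 + s ≤ max 1 (2 / b) * (1 + x) := by
  have hs_le : s ≤ 2 / b * x := by
    rw [div_mul_eq_mul_div, le_div_iff₀ hb]
    linarith
  have hx0 : 0 ≤ x := le_trans (by positivity) hx
  nlinarith [le_max_left 1 (2 / b), le_max_right 1 (2 / b)]

lemma exp_mul_inv_one_add_abs_le {η b t s : ℝ} (hη : 0 ≤ η) (hb : 0 < b) (hs : 0 ≤ s) :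
    exp (-η * t) * (1 + |b * s - t|)⁻¹ ≤
      max 1 (2 / b) *
        (exp (-(η / 2) * t) * exp (-(η * b / 4) * s) + exp (-η * t) * (1 + s)⁻¹) := by
  set C := max 1 (2 / b)
  have hC : 1 ≤ C := le_max_left _ _
  have hexp : 0 < exp (-(η / 2) * t) * exp (-(η * b / 4) * s) := by positivity
  have hinv : 0 ≤ exp (-η * t) * (1 + s)⁻¹ := by positivity
  rcases le_or_gt (b * s) (2 * t) with hst | hst
  · have hinv_le_one : (1 + |b * s - t|)⁻¹ ≤ 1 :=
      inv_le_one_of_one_le₀ (by linarith [abs_nonneg (b * s - t)])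
    calc exp (-η * t) * (1 + |b * s - t|)⁻¹
        ≤ exp (-η * t) := mul_le_of_le_one_right (exp_pos _).le hinv_le_one
      _ ≤ exp (-(η / 2) * t) * exp (-(η * b / 4) * s) := exp_neg_mul_le_exp_mul_exp hη hst
      _ ≤ C * (exp (-(η / 2) * t) * exp (-(η * b / 4) * s) + exp (-η * t) * (1 + s)⁻¹) := by
        nlinarith
  · have hhalf : b * s / 2 ≤ |b * s - t| := le_trans (by linarith) (le_abs_self _)
    have hkey : (1 + |b * s - t|)⁻¹ ≤ C * (1 + s)⁻¹ := by
      rw [← div_eq_mul_inv, inv_le_iff_one_le_mul₀ (by positivity), ← mul_div_right_comm,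
        one_le_div₀ (by linarith)]
      exact one_add_le_max_mul_one_add hb hs hhalf
    calc exp (-η * t) * (1 + |b * s - t|)⁻¹
        ≤ exp (-η * t) * (C * (1 + s)⁻¹) := mul_le_mul_of_nonneg_left hkey (exp_pos _).le
      _ ≤ C * (exp (-(η / 2) * t) * exp (-(η * b / 4) * s) + exp (-η * t) * (1 + s)⁻¹) := by
        nlinarith

theorem localized_algebraic_split (a η : ℝ) (ha : a < 0) (hη : 0 < η) :
    ∃ C > 0, ∃ η₁ > 0, ∃ η₂ > 0, ∀ y : ℝ, y ≤ 0 → ∀ s : ℝ, 0 ≤ s →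
      Real.exp (-η * |y|) * (1 + |y - a*s|)⁻¹ ≤
        C * (Real.exp (-η₁ * |y|) * Real.exp (-η₂ * s) +
          Real.exp (-η * |y|) * (1 + s)⁻¹) := by
  have hb : 0 < -a := neg_pos.mpr ha
  refine ⟨max 1 (2 / -a), by positivity, η / 2, by positivity, η * -a / 4, by positivity, ?_⟩
  intro y hy s hs
  have hdiff : y - a * s = -a * s - |y| := by rw [abs_of_nonpos hy]; ring
  rw [hdiff]
  exact exp_mul_inv_one_add_abs_le hη.le hb hs
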